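/- arXiv:0807.0874 — 6 statements merged into one kernel-verified Lean document; each statement's English description precedes it below -/
import Mathlib

section
/- Let I ⊆ ℝ be a nonempty open interval, let p, q : I → ℝ be differentiable, let A, B, C, D : I → ℝ be arbitrary functions, and let φ : I → ℝ be twice differentiable satisfying φ'(t) + p(t)·φ(t) = q(t) and A(t)·φ''(t) + B(t)·φ'(t) + C(t)·φ(t) = D(t) for every t ∈ I. If t₀ ∈ I is a point where A(t₀)·(p(t₀)² − p'(t₀)) − B(t₀)·p(t₀) + C(t₀) ≠ 0, then φ(t₀) = (D(t₀) − A(t₀)·(q'(t₀) − p(t₀)·q(t₀)) − B(t₀)·q(t₀)) / (A(t₀)·(p(t₀)² − p'(t₀)) − B(t₀)·p(t₀) + C(t₀)). -/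
/-- Second alternative of the Lemma on systems {φ' + pφ = q, Aφ'' + Bφ' + Cφ = D}:
at any point where A(p² − p') − Bp + C ≠ 0, the solution φ is given by the
ratio (D − A(q' − pq) − Bq) / (A(p² − p') − Bp + C). -/
theorem solution_formula
    (I : Set ℝ) (hIopen : IsOpen I) (hIconn : I.OrdConnected) (hIne : I.Nonempty)
    (p q A B C D φ : ℝ → ℝ)
    (hp : ∀ t ∈ I, DifferentiableAt ℝ p t)
    (hq : ∀ t ∈ I, DifferentiableAt ℝ q t)
    (hφ : ∀ t ∈ I, DifferentiableAt ℝ φ t)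
    (hφ' : ∀ t ∈ I, DifferentiableAt ℝ (deriv φ) t)
    (h1 : ∀ t ∈ I, deriv φ t + p t * φ t = q t)
    (h2 : ∀ t ∈ I, A t * deriv (deriv φ) t + B t * deriv φ t + C t * φ t = D t)
    (t₀ : ℝ) (ht₀ : t₀ ∈ I)
    (hden : A t₀ * ((p t₀) ^ 2 - deriv p t₀) - B t₀ * p t₀ + C t₀ ≠ 0) :
    φ t₀ = (D t₀ - A t₀ * (deriv q t₀ - p t₀ * q t₀) - B t₀ * q t₀)
      / (A t₀ * ((p t₀) ^ 2 - deriv p t₀) - B t₀ * p t₀ + C t₀) := by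
  have hnhds : I ∈ nhds t₀ := hIopen.mem_nhds ht₀
  have heq : ∀ᶠ t in nhds t₀, deriv φ t = q t - p t * φ t := by
    filter_upwards [hnhds] with t ht
    linarith [h1 t ht]
  have hd2 : deriv (deriv φ) t₀ = deriv q t₀ - (deriv p t₀ * φ t₀ + p t₀ * deriv φ t₀) := by
    rw [Filter.EventuallyEq.deriv_eq heq]
    rw [deriv_fun_sub (hq t₀ ht₀) (show DifferentiableAt ℝ (fun x => p x * φ x) t₀ from (hp t₀ ht₀).mul (hφ t₀ ht₀)),
      deriv_fun_mul (hp t₀ ht₀) (hφ t₀ ht₀)]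
  have h1' := h1 t₀ ht₀
  have h2' := h2 t₀ ht₀
  rw [hd2] at h2'
  have hv : deriv φ t₀ = q t₀ - p t₀ * φ t₀ := by linarith
  rw [hv] at h2'
  rw [eq_div_iff hden]
  linear_combination h2'
end

section
/- Fix real constants m, a, c, k, κ, λ. Suppose φ is a real function of the real variable τ that is twice differentiable at a point τ₀, and that equations (E1) and (E2) hold at τ₀. Then equation (E0) holds at τ₀, i.e. τ₀(τ₀−c)(τ₀−2c)(1+kτ₀)·φ'(τ₀) + [−mkτ₀³ − (m+a−2c(2m−1)k)τ₀² + (c(3a+4m−2) − 2c²(2m−1)k)τ₀ − 2c²(a+2m−1)]·φ(τ₀) = (1+kτ₀)·(−κτ₀²/2 + λ(τ₀−c)). -/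
/-- Adding τ₀ times (E1) to −(τ₀−c) times (E2) yields the first-order equation (E0)
at any point τ₀ where φ is twice differentiable and both (E1) and (E2) hold. -/
theorem E1_E2_implies_E0
    (m a c k κ lam : ℝ) (φ : ℝ → ℝ) (τ₀ : ℝ)
    (hφ : DifferentiableAt ℝ φ τ₀)
    (hφ' : DifferentiableAt ℝ (deriv φ) τ₀)
    (hE1 : τ₀*(τ₀-c)^2*(1+k*τ₀) * deriv (deriv φ) τ₀
      + ((2-m)*k*τ₀^3 + (2-m-a+(3*m-4)*k*c)*τ₀^2
          + ((2*a+3*m-4)*c - 2*(m-1)*k*c^2)*τ₀ - (2*m-2+a)*c^2) * deriv φ τ₀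
      - m*(τ₀ + k*τ₀^2) * φ τ₀
      = -(κ*τ₀*(1+k*τ₀))/2)
    (hE2 : τ₀^2*(τ₀-c)*(1+k*τ₀) * deriv (deriv φ) τ₀
      + ((1-m)*k*τ₀^3 + (1-m-a+2*m*k*c)*τ₀^2 + c*(a+2*m)*τ₀) * deriv φ τ₀
      + ((a-2*c*(2*m-1)*k)*τ₀ - 2*c*(a+2*m-1)) * φ τ₀
      = -(lam*(1+k*τ₀))) :
    τ₀*(τ₀-c)*(τ₀-2*c)*(1+k*τ₀) * deriv φ τ₀
      + (-(m*k*τ₀^3) - (m+a-2*c*(2*m-1)*k)*τ₀^2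
          + (c*(3*a+4*m-2) - 2*c^2*(2*m-1)*k)*τ₀ - 2*c^2*(a+2*m-1)) * φ τ₀
      = (1+k*τ₀) * (-(κ*τ₀^2)/2 + lam*(τ₀-c)) := by
  linear_combination τ₀ * hE1 - (τ₀-c) * hE2
end

section
/- Fix real constants m, a, c, k, κ, λ. For every real τ with τ ≠ 0, τ ≠ c, τ ≠ 2c and 1 + kτ ≠ 0, one has D(τ) − A(τ)·(q'(τ) − p(τ)·q(τ)) − B(τ)·q(τ) = 0, where p, q, A, B, D are the functions defined in the context and q' is the derivative of q. -/
/-- The coefficient p of the first-order equation (E0) written as φ' + pφ = q. -/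
noncomputable def pFun (m a c k : ℝ) : ℝ → ℝ := fun τ =>
  (-(m*k*τ^3) - (m+a-2*c*(2*m-1)*k)*τ^2
      + (c*(3*a+4*m-2) - 2*c^2*(2*m-1)*k)*τ - 2*c^2*(a+2*m-1))
    / (τ*(τ-c)*(τ-2*c)*(1+k*τ))

/-- The right-hand side q of the first-order equation (E0) written as φ' + pφ = q. -/
noncomputable def qFun (c κ lam : ℝ) : ℝ → ℝ := fun τ =>
  (-(κ*τ^2)/2 + lam*(τ-c)) / (τ*(τ-c)*(τ-2*c))

/-- The coefficient A of the second-order equation (E1) written as Aφ'' + Bφ' + Cφ = D. -/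
def AFun (c k : ℝ) : ℝ → ℝ := fun τ => τ*(τ-c)^2*(1+k*τ)

/-- The coefficient B of the second-order equation (E1) written as Aφ'' + Bφ' + Cφ = D. -/
def BFun (m a c k : ℝ) : ℝ → ℝ := fun τ =>
  (2-m)*k*τ^3 + (2-m-a+(3*m-4)*k*c)*τ^2
    + ((2*a+3*m-4)*c - 2*(m-1)*k*c^2)*τ - (2*m-2+a)*c^2

/-- The coefficient C of the second-order equation (E1) written as Aφ'' + Bφ' + Cφ = D. -/
def CFun (m k : ℝ) : ℝ → ℝ := fun τ => -(m*(τ + k*τ^2))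

/-- The right-hand side D of the second-order equation (E1) written as Aφ'' + Bφ' + Cφ = D. -/
noncomputable def DFun (k κ : ℝ) : ℝ → ℝ := fun τ => -(κ*τ*(1+k*τ))/2

/-- The identity D − A(q' − pq) − Bq = 0 for the system coming from (E0) and (E1). -/
theorem numerator_vanishes (m a c k κ lam : ℝ) :
    ∀ τ : ℝ, τ ≠ 0 → τ ≠ c → τ ≠ 2*c → 1 + k*τ ≠ 0 →
      DFun k κ τ
        - AFun c k τ * (deriv (qFun c κ lam) τ - pFun m a c k τ * qFun c κ lam τ)
        - BFun m a c k τ * qFun c κ lam τ = 0 := by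
  intro τ h0 hc h2c hk
  have hc' : τ - c ≠ 0 := sub_ne_zero.mpr hc
  have h2c' : τ - 2*c ≠ 0 := sub_ne_zero.mpr h2c
  have hD : τ*(τ-c)*(τ-2*c) ≠ 0 := by positivity
  have h1 : HasDerivAt (fun τ : ℝ => -(κ*τ^2)/2 + lam*(τ-c)) (-(κ*τ)+lam) τ := by
    have := (((hasDerivAt_pow 2 τ).const_mul κ).neg.div_const 2).add
      (((hasDerivAt_id τ).sub_const c).const_mul lam)
    convert this using 1
    · rfl
    · rfl
    · ext x; simp
    · simp; ring
  have h2 : HasDerivAt (fun τ : ℝ => τ*(τ-c)*(τ-2*c))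
      ((τ-c)*(τ-2*c)+τ*(τ-2*c)+τ*(τ-c)) τ := by
    have := (((hasDerivAt_id τ).mul ((hasDerivAt_id τ).sub_const c)).mul
      (((hasDerivAt_id τ).sub_const (2*c))))
    convert this using 1
    · rfl
    · rfl
    · ext x; simp
    · simp; ring
  have hd : deriv (qFun c κ lam) τ =
      ((-(κ*τ)+lam) * (τ*(τ-c)*(τ-2*c)) -
        (-(κ*τ^2)/2 + lam*(τ-c)) * ((τ-c)*(τ-2*c)+τ*(τ-2*c)+τ*(τ-c))) /
      (τ*(τ-c)*(τ-2*c))^2 := (h1.div h2 hD).deriv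
  rw [hd]
  simp only [pFun, qFun, AFun, BFun, DFun]
  have hk2 : 1 + τ*k ≠ 0 := by rwa [mul_comm]
  field_simp
  ring
end

section
/- Fix real constants m, a, c, k, κ, λ. For every real τ with τ ≠ 0, τ ≠ c, τ ≠ 2c and 1 + kτ ≠ 0, one has A(τ)·(p(τ)² − p'(τ)) − B(τ)·p(τ) + C(τ) = a(τ−c)²(2ck+1) / ((τ−2c)(kτ+1)), where p, A, B, C are the functions defined in the context and p' is the derivative of p. -/
/-- The identity A(p² − p') − Bp + C = a(τ−c)²(2ck+1)/((τ−2c)(kτ+1))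
for the system coming from (E0) and (E1). -/
theorem denominator_formula (m a c k κ lam : ℝ) :
    ∀ τ : ℝ, τ ≠ 0 → τ ≠ c → τ ≠ 2*c → 1 + k*τ ≠ 0 →
      AFun c k τ * ((pFun m a c k τ)^2 - deriv (pFun m a c k) τ)
        - BFun m a c k τ * pFun m a c k τ + CFun m k τ
      = a*(τ-c)^2*(2*c*k+1) / ((τ-2*c)*(k*τ+1)) := by
  intro τ h0 h1 h2 h3
  have h1' : τ - c ≠ 0 := sub_ne_zero.mpr h1
  have h2' : τ - 2*c ≠ 0 := sub_ne_zero.mpr h2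
  have hDne : τ*(τ-c)*(τ-2*c)*(1+k*τ) ≠ 0 := by
    exact mul_ne_zero (mul_ne_zero (mul_ne_zero h0 h1') h2') h3
  have hid : HasDerivAt (fun x : ℝ => x) 1 τ := hasDerivAt_id τ
  have h3p : HasDerivAt (fun x : ℝ => x^3) (3*τ^2) τ := by
    simpa using hasDerivAt_pow 3 τ
  have h2p : HasDerivAt (fun x : ℝ => x^2) (2*τ) τ := by
    simpa using hasDerivAt_pow 2 τ
  have hN : HasDerivAt (fun x : ℝ => -(m*k*x^3) - (m+a-2*c*(2*m-1)*k)*x^2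
      + (c*(3*a+4*m-2) - 2*c^2*(2*m-1)*k)*x - 2*c^2*(a+2*m-1))
      (-(m*k*(3*τ^2)) - (m+a-2*c*(2*m-1)*k)*(2*τ)
      + (c*(3*a+4*m-2) - 2*c^2*(2*m-1)*k)*1) τ := by
    have := (((h3p.const_mul (m*k)).neg.sub (h2p.const_mul (m+a-2*c*(2*m-1)*k))).add
      (hid.const_mul (c*(3*a+4*m-2) - 2*c^2*(2*m-1)*k))).sub_const (2*c^2*(a+2*m-1))
    simpa using this
  have ha : HasDerivAt (fun x : ℝ => x - c) 1 τ := hid.sub_const c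
  have hb : HasDerivAt (fun x : ℝ => x - 2*c) 1 τ := hid.sub_const (2*c)
  have hc : HasDerivAt (fun x : ℝ => 1 + k*x) k τ := by
    simpa using (hid.const_mul k).const_add 1
  have hD := ((hid.mul ha).mul hb).mul hc
  have hp : HasDerivAt (fun x : ℝ => (-(m*k*x^3) - (m+a-2*c*(2*m-1)*k)*x^2
      + (c*(3*a+4*m-2) - 2*c^2*(2*m-1)*k)*x - 2*c^2*(a+2*m-1))
      / (x*(x-c)*(x-2*c)*(1+k*x))) _ τ := hN.div hD hDne
  rw [show pFun m a c k = (fun x : ℝ => (-(m*k*x^3) - (m+a-2*c*(2*m-1)*k)*x^2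
      + (c*(3*a+4*m-2) - 2*c^2*(2*m-1)*k)*x - 2*c^2*(a+2*m-1))
      / (x*(x-c)*(x-2*c)*(1+k*x))) from rfl, hp.deriv]
  simp only [pFun, AFun, BFun, CFun, Pi.mul_apply]
  have hk : k*τ+1 ≠ 0 := by intro h; exact h3 (by linarith)
  rw [eq_div_iff (mul_ne_zero h2' hk)]
  have h2'' : τ - c*2 ≠ 0 := by rwa [mul_comm] at h2'
  have h3' : 1 + τ*k ≠ 0 := by rwa [mul_comm] at h3
  field_simp
  ring
end

section
/- Fix real constants m, a, c, k, κ, λ with a ≠ 0 and 2ck + 1 ≠ 0. Let I ⊆ ℝ be a nonempty open interval and let φ : I → ℝ be twice continuously differentiable. If φ satisfies both equations (E1) and (E2) at every point of I, then φ is identically zero on I. -/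
private lemma hasDerivAt_poly4 (p0 p1 p2 p3 p4 x : ℝ) :
    HasDerivAt (fun t : ℝ => p0 + p1*t + p2*t^2 + p3*t^3 + p4*t^4)
      (p1 + 2*p2*x + 3*p3*x^2 + 4*p4*x^3) x := by
  have h1 : HasDerivAt (fun t : ℝ => t) 1 x := hasDerivAt_id x
  have h :=
    ((((hasDerivAt_const x p0).add (h1.const_mul p1)).add
        ((hasDerivAt_pow 2 x).const_mul p2)).add
          ((hasDerivAt_pow 3 x).const_mul p3)).add
            ((hasDerivAt_pow 4 x).const_mul p4)
  refine h.congr_deriv ?_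
  push_cast
  ring

/-- If a(2ck+1) ≠ 0, the system (E1)–(E2) has no nonzero solutions on any
nonempty open interval: any C² solution is identically zero. -/
theorem no_nonzero_solutions_E1_E2
    (m a c k κ lam : ℝ) (ha : a ≠ 0) (hck : 2*c*k + 1 ≠ 0)
    (I : Set ℝ) (hIopen : IsOpen I) (hIconn : I.OrdConnected) (hIne : I.Nonempty)
    (φ : ℝ → ℝ) (hφ : ContDiffOn ℝ 2 φ I)
    (hE1 : ∀ τ ∈ I,
      τ*(τ-c)^2*(1+k*τ) * deriv (deriv φ) τ
        + ((2-m)*k*τ^3 + (2-m-a+(3*m-4)*k*c)*τ^2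
            + ((2*a+3*m-4)*c - 2*(m-1)*k*c^2)*τ - (2*m-2+a)*c^2) * deriv φ τ
        - m*(τ + k*τ^2) * φ τ
        = -(κ*τ*(1+k*τ))/2)
    (hE2 : ∀ τ ∈ I,
      τ^2*(τ-c)*(1+k*τ) * deriv (deriv φ) τ
        + ((1-m)*k*τ^3 + (1-m-a+2*m*k*c)*τ^2 + c*(a+2*m)*τ) * deriv φ τ
        + ((a-2*c*(2*m-1)*k)*τ - 2*c*(a+2*m-1)) * φ τ
        = -(lam*(1+k*τ))) :
    ∀ τ ∈ I, φ τ = 0 := by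
  have hd1 : ∀ τ ∈ I, DifferentiableAt ℝ φ τ := fun τ hτ =>
    (hφ.differentiableOn (by norm_num)).differentiableAt (hIopen.mem_nhds hτ)
  have hd2 : ∀ τ ∈ I, DifferentiableAt ℝ (deriv φ) τ := fun τ hτ =>
    ((hφ.deriv_of_isOpen hIopen (m := 1) (by norm_num)).differentiableOn
      (one_ne_zero)).differentiableAt (hIopen.mem_nhds hτ)
  -- First-order consequence L1 : A φ' + B φ - C = 0 on I
  have hg0 : ∀ t ∈ I,
      ((0:ℝ) + (-2*c^2)*t + (3*c - 2*c^2*k)*t^2 + (-1 + 3*c*k)*t^3 + (-k)*t^4) * deriv φ t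
        + ((-2*c^2 + 2*a*c^2 + 4*m*c^2) + (2*c - 2*c^2*k - 3*a*c - 4*m*c + 4*m*c^2*k)*t
            + (2*c*k + a + m - 4*m*c*k)*t^2 + (m*k)*t^3 + (0:ℝ)*t^4) * φ t
        - ((c*lam) + (-lam + c*k*lam)*t + (κ/2 - k*lam)*t^2 + (k*κ/2)*t^3 + (0:ℝ)*t^4) = 0 := by
    intro t ht
    linear_combination (t - c) * (hE2 t ht) - t * (hE1 t ht)
  -- key algebraic identity on I
  have key : ∀ τ ∈ I, (τ^2*(τ-c)^4*(τ-2*c)*(1+k*τ)) * φ τ = 0 := by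
    intro τ hτ
    have hA := hasDerivAt_poly4 (0:ℝ) (-2*c^2) (3*c - 2*c^2*k) (-1 + 3*c*k) (-k) τ
    have hB := hasDerivAt_poly4 (-2*c^2 + 2*a*c^2 + 4*m*c^2)
      (2*c - 2*c^2*k - 3*a*c - 4*m*c + 4*m*c^2*k) (2*c*k + a + m - 4*m*c*k) (m*k) (0:ℝ) τ
    have hC := hasDerivAt_poly4 (c*lam) (-lam + c*k*lam) (κ/2 - k*lam) (k*κ/2) (0:ℝ) τ
    have hG := ((hA.mul (hd2 τ hτ).hasDerivAt).add (hB.mul (hd1 τ hτ).hasDerivAt)).sub hC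
    have hev : (fun t : ℝ =>
        ((0:ℝ) + (-2*c^2)*t + (3*c - 2*c^2*k)*t^2 + (-1 + 3*c*k)*t^3 + (-k)*t^4) * deriv φ t
          + ((-2*c^2 + 2*a*c^2 + 4*m*c^2) + (2*c - 2*c^2*k - 3*a*c - 4*m*c + 4*m*c^2*k)*t
              + (2*c*k + a + m - 4*m*c*k)*t^2 + (m*k)*t^3 + (0:ℝ)*t^4) * φ t
          - ((c*lam) + (-lam + c*k*lam)*t + (κ/2 - k*lam)*t^2 + (k*κ/2)*t^3 + (0:ℝ)*t^4))
        =ᶠ[nhds τ] (fun _ => (0:ℝ)) := by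
      filter_upwards [hIopen.mem_nhds hτ] with t ht using hg0 t ht
    have h2 := (hasDerivAt_const τ (0:ℝ)).congr_of_eventuallyEq hev
    have l1' := hG.unique h2
    have l1 := hg0 τ hτ
    have e1 := hE1 τ hτ
    have final : a * (2*c*k + 1) * ((τ^2*(τ-c)^4*(τ-2*c)*(1+k*τ)) * φ τ) = 0 := by
      linear_combination
        (-((-(τ*(1+k*τ)*(τ-c)*(τ-2*c))) * (τ*(τ-c)^2*(1+k*τ)))) * l1'
          + (τ*(1+k*τ)*(τ-c)*(τ-2*c))^2 * e1
          + ((2*c^3 - 2*c^4*k)*τ^2 + (-5*c^2 + 11*c^3*k - 2*c^4*k^2)*τ^3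
              + (4*c - 19*c^2*k + 9*c^3*k^2)*τ^4 + (-1 + 13*c*k - 14*c^2*k^2)*τ^5
              + (-3*k + 9*c*k^2)*τ^6 + (-2*k^2)*τ^7) * l1
    exact (mul_eq_zero.mp final).resolve_left (mul_ne_zero ha hck)
  -- conclude by continuity
  intro τ₀ hτ₀
  by_contra hne
  have hcont : ContinuousAt φ τ₀ := hφ.continuousOn.continuousAt (hIopen.mem_nhds hτ₀)
  have hmem : ∀ᶠ t in nhds τ₀, t ∈ I := hIopen.mem_nhds hτ₀
  have hev2 : ∀ᶠ t in nhds τ₀, t ∈ I ∧ φ t ≠ 0 := hmem.and (hcont.eventually_ne hne)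
  rcases Metric.eventually_nhds_iff.mp hev2 with ⟨ε, hε, hball⟩
  have hBfin : ({t : ℝ | t = 0 ∨ t = c ∨ t = 2*c ∨ 1 + k*t = 0}).Finite := by
    rcases eq_or_ne k 0 with hk | hk
    · apply Set.Finite.subset (Set.toFinite {(0:ℝ), c, 2*c})
      intro t ht
      rcases ht with h | h | h | h
      · simp [h]
      · simp [h]
      · simp [h]
      · exfalso; rw [hk] at h; nlinarith
    · apply Set.Finite.subset (Set.toFinite {(0:ℝ), c, 2*c, -1/k})
      intro t ht
      rcases ht with h | h | h | h
      · simp [h]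
      · simp [h]
      · simp [h]
      · have : t = -1/k := by field_simp; linarith
        simp [this]
  obtain ⟨t, htJ, htB⟩ :=
    ((Set.Ioo_infinite (show τ₀ - ε < τ₀ + ε by linarith)).diff hBfin).nonempty
  simp only [Set.mem_setOf_eq, not_or] at htB
  obtain ⟨ht0, htc, ht2c, hkt⟩ := htB
  have hdist : dist t τ₀ < ε := by
    rw [Real.dist_eq, abs_sub_lt_iff]
    exact ⟨by linarith [htJ.2], by linarith [htJ.1]⟩
  obtain ⟨htI, hφt⟩ := hball hdist
  have hprod : t^2*(t-c)^4*(t-2*c)*(1+k*t) ≠ 0 :=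
    mul_ne_zero (mul_ne_zero (mul_ne_zero (pow_ne_zero _ ht0)
      (pow_ne_zero _ (sub_ne_zero.mpr htc))) (sub_ne_zero.mpr ht2c)) hkt
  exact hφt ((mul_eq_zero.mp (key t htI)).resolve_left hprod)
end

section
/- Fix real constants m, c, κ, λ and a > 0. Let I ⊆ ℝ be a nonempty open interval and let φ : I → ℝ be twice continuously differentiable. If φ satisfies both equations (F1) and (F2) at every point of I, then φ is identically zero on I. -/
/-- For a > 0, the system (F1)–(F2) admits no nonzero solutions on any nonempty
open interval: any C² solution is identically zero. -/
theorem no_nonzero_solutions_F1_F2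
    (m a c κ lam : ℝ) (ha : 0 < a)
    (I : Set ℝ) (hIopen : IsOpen I) (hIconn : I.OrdConnected) (hIne : I.Nonempty)
    (φ : ℝ → ℝ) (hφ : ContDiffOn ℝ 2 φ I)
    (hF1 : ∀ f ∈ I,
      f*(f-c)^2 * deriv (deriv φ) f
        + (f-c)*(m*f + a*(f-c)) * deriv φ f
        - m*f * φ f = -(κ*f)/2)
    (hF2 : ∀ f ∈ I,
      -(f*(f-c)) * deriv (deriv φ) f
        + (-(a*(f-c)) - (m+1)*f) * deriv φ f
        - a * φ f = lam*f) :
    ∀ f ∈ I, φ f = 0 := by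
  -- differentiability facts
  have hφd : DifferentiableOn ℝ φ I := hφ.differentiableOn (by norm_num)
  have hψc : ContDiffOn ℝ 1 (deriv φ) I :=
    hφ.deriv_of_isOpen hIopen (by norm_num)
  have hψd : DifferentiableOn ℝ (deriv φ) I := hψc.differentiableOn (by norm_num)
  -- The combination (G) : F1 + (f-c)·F2, which eliminates φ''
  have hG : ∀ f ∈ I,
      -(f*(f-c)) * deriv φ f - (m*f + a*(f-c)) * φ f
        = -(κ*f)/2 + lam*f*(f-c) := by
    intro f hf
    have h1 := hF1 f hf
    have h2 := hF2 f hf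
    linear_combination h1 + (f - c) * h2
  -- the key pointwise algebraic vanishing
  have key : ∀ f ∈ I, a * (f - c) * φ f = 0 := by
    intro f hf
    have hdφ : HasDerivAt φ (deriv φ f) f :=
      ((hφd f hf).differentiableAt (hIopen.mem_nhds hf)).hasDerivAt
    have hdψ : HasDerivAt (deriv φ) (deriv (deriv φ) f) f :=
      ((hψd f hf).differentiableAt (hIopen.mem_nhds hf)).hasDerivAt
    -- derivative of the left side of (G)
    have h1 : HasDerivAt (fun x : ℝ => -(x*(x-c))) (-(1*(f-c) + f*1)) f :=
      ((hasDerivAt_id f).mul ((hasDerivAt_id f).sub_const c)).neg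
    have h2 : HasDerivAt (fun x : ℝ => m*x + a*(x-c)) (m*1 + a*1) f :=
      ((hasDerivAt_id f).const_mul m).add (((hasDerivAt_id f).sub_const c).const_mul a)
    have hL : HasDerivAt
        (fun x : ℝ => -(x*(x-c)) * deriv φ x - (m*x + a*(x-c)) * φ x)
        ((-(1*(f-c) + f*1)) * deriv φ f + (-(f*(f-c))) * deriv (deriv φ) f
          - ((m*1 + a*1) * φ f + (m*f + a*(f-c)) * deriv φ f)) f :=
      (h1.mul hdψ).sub (h2.mul hdφ)
    -- derivative of the right side of (G)
    have hR : HasDerivAt (fun x : ℝ => -(κ*x)/2 + lam*x*(x-c))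
        ((-(κ*1))/2 + ((lam*1)*(f-c) + (lam*f)*1)) f := by
      have hr1 : HasDerivAt (fun x : ℝ => -(κ*x)/2) ((-(κ*1))/2) f :=
        ((hasDerivAt_id f).const_mul κ).neg.div_const 2
      have hr2 : HasDerivAt (fun x : ℝ => lam*x*(x-c))
          ((lam*1)*(f-c) + (lam*f)*1) f :=
        ((hasDerivAt_id f).const_mul lam).mul ((hasDerivAt_id f).sub_const c)
      exact hr1.add hr2
    -- the two sides agree on the open set I, hence have equal derivatives at f
    have heq : (fun x : ℝ => -(x*(x-c)) * deriv φ x - (m*x + a*(x-c)) * φ x)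
        =ᶠ[nhds f] (fun x : ℝ => -(κ*x)/2 + lam*x*(x-c)) := by
      filter_upwards [hIopen.mem_nhds hf] with x hx
      exact hG x hx
    have hL' : HasDerivAt (fun x : ℝ => -(κ*x)/2 + lam*x*(x-c))
        ((-(1*(f-c) + f*1)) * deriv φ f + (-(f*(f-c))) * deriv (deriv φ) f
          - ((m*1 + a*1) * φ f + (m*f + a*(f-c)) * deriv φ f)) f :=
      hL.congr_of_eventuallyEq heq.symm
    have hG' : (-(1*(f-c) + f*1)) * deriv φ f + (-(f*(f-c))) * deriv (deriv φ) f
          - ((m*1 + a*1) * φ f + (m*f + a*(f-c)) * deriv φ f)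
        = (-(κ*1))/2 + ((lam*1)*(f-c) + (lam*f)*1) := hL'.unique hR
    have h2' := hF2 f hf
    have hGf := hG f hf
    linear_combination f * hG' - f * h2' - hGf
  -- conclude: φ vanishes away from c, and at c by continuity
  intro f hf
  rcases eq_or_ne f c with rfl | hfc
  · -- f = c : use continuity and vanishing on a punctured neighborhood
    have hcont : ContinuousAt φ f :=
      (hφ.continuousOn f hf).continuousAt (hIopen.mem_nhds hf)
    have h1 : Filter.Tendsto φ (nhdsWithin f {f}ᶜ) (nhds (φ f)) :=
      hcont.continuousWithinAt.tendsto
    have h2 : Filter.Tendsto φ (nhdsWithin f {f}ᶜ) (nhds 0) := by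
      apply Filter.Tendsto.congr' _ tendsto_const_nhds
      have hmem : I ∈ nhdsWithin f {f}ᶜ :=
        nhdsWithin_le_nhds (hIopen.mem_nhds hf)
      filter_upwards [hmem, self_mem_nhdsWithin] with x hx hx'
      have hx'' : x ≠ f := hx'
      have hkx := key x hx
      have hx3 : x - f ≠ 0 := sub_ne_zero.mpr hx''
      rcases mul_eq_zero.mp hkx with h | h
      · exfalso
        rcases mul_eq_zero.mp h with h' | h'
        · exact (ne_of_gt ha) h'
        · exact hx'' (sub_eq_zero.mp h')
      · exact h.symm
    exact tendsto_nhds_unique h1 h2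
  · have := key f hf
    have hfc' : f - c ≠ 0 := sub_ne_zero.mpr hfc
    have ha' : a ≠ 0 := ne_of_gt ha
    rcases mul_eq_zero.mp this with h | h
    · exact absurd (mul_eq_zero.mp h) (by push_neg; exact ⟨ha', hfc'⟩)
    · exact h
end
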